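/- (Relation between influence matrix and covariance matrix.) Let ρ be a probability measure on Ω_0 ⊂ {0,1}^{qn} (one-hot blocks) with ρ(η^i_a = 1) > 0 for all i,a. Define the influence matrix J[ρ] by J(i,a;i,b) = 0 and J(i,a;j,b) = ρ(η^j_b=1 | η^i_a=1) − ρ(η^j_b=1) for i ≠ j. Then all eigenvalues of J[ρ] are real, and the maximum eigenvalue of the covariance matrix Cov[ρ] satisfies λ(Cov[ρ]) ≤ λ(J[ρ]) + 1/2. -/

import Mathlib

open Finset Matrix
open scoped Classical

noncomputable section

variable (n q : ℕ)

/-- Marginal probability `p^i_a = ρ(σ i = a)` of the one-hot variable `η^i_a`. -/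
def marg (ρ : (Fin n → Fin q) → ℝ) (i : Fin n) (a : Fin q) : ℝ :=
  ∑ σ, ρ σ * (if σ i = a then (1 : ℝ) else 0)

/-- Pair probability `ρ(η^i_a = 1, η^j_b = 1)`. -/
def pairProb (ρ : (Fin n → Fin q) → ℝ) (p p' : Fin n × Fin q) : ℝ :=
  ∑ σ, ρ σ * ((if σ p.1 = p.2 then (1 : ℝ) else 0) *
    (if σ p'.1 = p'.2 then (1 : ℝ) else 0))

/-- Covariance matrix of the one-hot encoding. -/
def covMat (ρ : (Fin n → Fin q) → ℝ) :
    Matrix (Fin n × Fin q) (Fin n × Fin q) ℝ :=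
  fun p p' => pairProb n q ρ p p' - marg n q ρ p.1 p.2 * marg n q ρ p'.1 p'.2

/-- Influence matrix `J[ρ]`: zero on diagonal blocks, and
`J(i,a;j,b) = ρ(η^j_b = 1 | η^i_a = 1) − ρ(η^j_b = 1)` for `i ≠ j`. -/
def inflMat (ρ : (Fin n → Fin q) → ℝ) :
    Matrix (Fin n × Fin q) (Fin n × Fin q) ℝ :=
  fun p p' => if p.1 = p'.1 then 0
    else pairProb n q ρ p p' / marg n q ρ p.1 p.2 - marg n q ρ p'.1 p'.2

/-! Write `D` for the diagonal matrix of the marginals and `C` for the covariance matrix with its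
diagonal blocks set to zero. Then `J = D⁻¹ C`, and since `C` is symmetric, `J` is similar to the
symmetric matrix `D^{-1/2} C D^{-1/2}`: its spectrum is real, and for `K ≥ λ(J)` we get
`⟪u, C u⟫ ≤ K ⟪D^{1/2} u, D^{1/2} u⟫ ≤ K ⟪u, u⟫` (`K ≥ 0` because `C` has zero diagonal, and
`D ≤ 1`). Each diagonal block of the covariance is the covariance `diag p - p pᵀ` of a one-hot
vector, whose quadratic form is a variance, at most `(max u - min u)² / 4 ≤ ⟪u, u⟫ / 2`. -/

namespace Matrix

variable {ι : Type*} [Fintype ι] [DecidableEq ι]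

theorem spectrum_diagonal_mul_mul_diagonal_inv {K : Type*} [Field K] (A : Matrix ι ι K)
    {d : ι → K} (hd : ∀ i, d i ≠ 0) :
    spectrum K (diagonal d * A * diagonal d⁻¹) = spectrum K A := by
  have hinv : diagonal d * diagonal d⁻¹ = 1 := by
    simp [diagonal_mul_diagonal, hd]
  have hinv' : diagonal d⁻¹ * diagonal d = 1 := by
    simp [diagonal_mul_diagonal, hd]
  exact spectrum.units_conjugate (u := ⟨diagonal d, diagonal d⁻¹, hinv, hinv'⟩)

theorem IsHermitian.im_eq_zero_of_mem_spectrum_map_ofReal {S : Matrix ι ι ℝ}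
    (hS : S.IsHermitian) {z : ℂ} (hz : z ∈ spectrum ℂ (S.map ((↑) : ℝ → ℂ))) : z.im = 0 := by
  have hSC : (S.map ((↑) : ℝ → ℂ)).IsHermitian :=
    hS.map _ fun _ => (Complex.conj_ofReal _).symm
  rw [hSC.spectrum_eq_image_range] at hz
  obtain ⟨_, _, rfl⟩ := hz
  simp

open scoped MatrixOrder in
theorem IsHermitian.dotProduct_mulVec_le_of_spectrum_le {S : Matrix ι ι ℝ} (hS : S.IsHermitian)
    {K : ℝ} (hK : ∀ t ∈ spectrum ℝ S, t ≤ K) (v : ι → ℝ) :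
    v ⬝ᵥ S *ᵥ v ≤ K * (v ⬝ᵥ v) := by
  have hle : S ≤ algebraMap ℝ _ K := le_algebraMap_of_spectrum_le hK hS
  have := (le_iff.mp hle).dotProduct_mulVec_nonneg v
  simp only [star_trivial, sub_mulVec, dotProduct_sub, Algebra.algebraMap_eq_smul_one,
    smul_mulVec, one_mulVec, dotProduct_smul, smul_eq_mul] at this
  linarith

section DiagonalInvMul

variable {C : Matrix ι ι ℝ} {d : ι → ℝ}

theorem diagonal_sqrt_mul_diagonal_inv_mul_mul_diagonal_inv_sqrt :
    (diagonal fun i => √(d i)) * (diagonal d⁻¹ * C) * diagonal (fun i => √(d i))⁻¹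
      = diagonal (fun i => √(d i))⁻¹ * C * diagonal (fun i => √(d i))⁻¹ := by
  ext i j
  have hsqrt_div : √(d i) * (d i)⁻¹ = (√(d i))⁻¹ := by
    rw [← div_eq_mul_inv, Real.sqrt_div_self']
    exact one_div _
  simp only [diagonal_mul, mul_diagonal, Pi.inv_apply]
  rw [← mul_assoc, hsqrt_div]

theorem IsHermitian.diagonal_mul_mul_diagonal (hC : C.IsHermitian) (s : ι → ℝ) :
    (diagonal s * C * diagonal s).IsHermitian := by
  simpa using isHermitian_conjTranspose_mul_mul (diagonal s) hC

theorem im_eq_zero_of_mem_spectrum_map_diagonal_inv_mul (hC : C.IsHermitian) (hd : ∀ i, 0 < d i)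
    {z : ℂ} (hz : z ∈ spectrum ℂ ((diagonal d⁻¹ * C).map ((↑) : ℝ → ℂ))) : z.im = 0 := by
  refine (hC.diagonal_mul_mul_diagonal (fun i => √(d i))⁻¹).im_eq_zero_of_mem_spectrum_map_ofReal ?_
  have hmap : ((diagonal fun i => √(d i)) * (diagonal d⁻¹ * C) * diagonal (fun i => √(d i))⁻¹).map
      ((↑) : ℝ → ℂ) = (diagonal fun i => (√(d i) : ℂ)) * (diagonal d⁻¹ * C).map ((↑) : ℝ → ℂ)
        * diagonal (fun i => (√(d i) : ℂ))⁻¹ := by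
    rw [show ((↑) : ℝ → ℂ) = Complex.ofRealHom from rfl]
    simp only [Matrix.map_mul, diagonal_map (map_zero _)]
    congr
    ext i
    simp
  rwa [← diagonal_sqrt_mul_diagonal_inv_mul_mul_diagonal_inv_sqrt,
    hmap, spectrum_diagonal_mul_mul_diagonal_inv]
  exact fun i => Complex.ofReal_ne_zero.2 (Real.sqrt_pos.2 (hd i)).ne'

theorem dotProduct_mulVec_le_of_spectrum_diagonal_inv_mul_le (hC : C.IsHermitian)
    (hd : ∀ i, 0 < d i) {K : ℝ} (hK : ∀ t ∈ spectrum ℝ (diagonal d⁻¹ * C), t ≤ K) (u : ι → ℝ) :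
    u ⬝ᵥ C *ᵥ u ≤ K * ∑ i, d i * u i ^ 2 := by
  have hs : ∀ i, √(d i) ≠ 0 := fun i => (Real.sqrt_pos.2 (hd i)).ne'
  rw [← spectrum_diagonal_mul_mul_diagonal_inv _ hs,
    diagonal_sqrt_mul_diagonal_inv_mul_mul_diagonal_inv_sqrt] at hK
  have hle := (hC.diagonal_mul_mul_diagonal (fun i => √(d i))⁻¹).dotProduct_mulVec_le_of_spectrum_le
    hK (fun i => √(d i) * u i)
  have hquad : (fun i => √(d i) * u i) ⬝ᵥ (diagonal (fun i => √(d i))⁻¹ * C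
      * diagonal (fun i => √(d i))⁻¹) *ᵥ (fun i => √(d i) * u i) = u ⬝ᵥ C *ᵥ u := by
    have hinner : diagonal (fun i => √(d i))⁻¹ *ᵥ (fun i => √(d i) * u i) = u := by
      ext i
      simp [mulVec_diagonal, hs]
    simp only [← mulVec_mulVec, hinner, mulVec_diagonal, dotProduct, Pi.inv_apply]
    exact Finset.sum_congr rfl fun i _ => by field_simp [hs i]
  have hnorm : (fun i => √(d i) * u i) ⬝ᵥ (fun i => √(d i) * u i) = ∑ i, d i * u i ^ 2 := by
    refine Finset.sum_congr rfl fun i _ => ?_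
    rw [mul_mul_mul_comm, Real.mul_self_sqrt (hd i).le, sq]
  rwa [hquad, hnorm] at hle

end DiagonalInvMul

end Matrix

section OneHotCovariance

variable {κ : Type*} [Fintype κ]

theorem sum_mul_sq_sub_sq_sum_mul_le {p : κ → ℝ} (hp1 : ∑ a, p a = 1) (u : κ → ℝ) (c : ℝ) :
    ∑ a, p a * u a ^ 2 - (∑ a, p a * u a) ^ 2 ≤ ∑ a, p a * (u a - c) ^ 2 := by
  have hexpand : ∑ a, p a * (u a - c) ^ 2
      = ∑ a, p a * u a ^ 2 - 2 * c * ∑ a, p a * u a + c ^ 2 * ∑ a, p a := by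
    simp only [Finset.mul_sum, ← Finset.sum_sub_distrib, ← Finset.sum_add_distrib]
    exact Finset.sum_congr rfl fun a _ => by ring
  rw [hexpand, hp1]
  nlinarith [sq_nonneg (∑ a, p a * u a - c)]

theorem sum_mul_sq_sub_sq_sum_mul_le_half_sum_sq {p : κ → ℝ} (hp : ∀ a, 0 ≤ p a)
    (hp1 : ∑ a, p a = 1) (u : κ → ℝ) :
    ∑ a, p a * u a ^ 2 - (∑ a, p a * u a) ^ 2 ≤ 1 / 2 * ∑ a, u a ^ 2 := by
  classical
  have : Nonempty κ := by
    by_contra h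
    simp [not_nonempty_iff.mp h] at hp1
  obtain ⟨aMax, hMax⟩ := Finite.exists_max u
  obtain ⟨aMin, hMin⟩ := Finite.exists_min u
  set M := u aMax
  set m := u aMin
  have hspread : ∑ a, p a * (u a - (M + m) / 2) ^ 2 ≤ ((M - m) / 2) ^ 2 := by
    calc ∑ a, p a * (u a - (M + m) / 2) ^ 2 ≤ ∑ a, p a * ((M - m) / 2) ^ 2 := by
          refine Finset.sum_le_sum fun a _ => mul_le_mul_of_nonneg_left ?_ (hp a)
          exact sq_le_sq' (by linarith [hMin a]) (by linarith [hMax a])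
      _ = ((M - m) / 2) ^ 2 := by rw [← Finset.sum_mul, hp1, one_mul]
  have hextremes : ((M - m) / 2) ^ 2 ≤ 1 / 2 * ∑ a, u a ^ 2 := by
    by_cases h : aMax = aMin
    · rw [show M = m by simp [M, m, h], sub_self, zero_div, sq, zero_mul]
      positivity
    · have := Finset.sum_le_sum_of_subset_of_nonneg (subset_univ {aMax, aMin})
        (fun a _ _ => sq_nonneg (u a))
      rw [Finset.sum_pair h] at this
      nlinarith [sq_nonneg (M + m)]
  linarith [sum_mul_sq_sub_sq_sum_mul_le hp1 u ((M + m) / 2)]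

def oneHotCov (p : κ → ℝ) : Matrix κ κ ℝ := diagonal p - vecMulVec p p

theorem dotProduct_oneHotCov_mulVec (p u : κ → ℝ) :
    u ⬝ᵥ oneHotCov p *ᵥ u = ∑ a, p a * u a ^ 2 - (∑ a, p a * u a) ^ 2 := by
  simp only [oneHotCov, sub_mulVec, dotProduct_sub, vecMulVec_mulVec, op_smul_eq_smul,
    dotProduct_smul, smul_eq_mul, dotProduct_comm u p, ← sq]
  congr 1
  exact Finset.sum_congr rfl fun a _ => by rw [mulVec_diagonal]; ring

theorem dotProduct_oneHotCov_mulVec_le {p : κ → ℝ} (hp : ∀ a, 0 ≤ p a) (hp1 : ∑ a, p a = 1)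
    (u : κ → ℝ) : u ⬝ᵥ oneHotCov p *ᵥ u ≤ 1 / 2 * (u ⬝ᵥ u) := by
  rw [dotProduct_oneHotCov_mulVec]
  simpa [dotProduct, sq] using
    sum_mul_sq_sub_sq_sum_mul_le_half_sum_sq hp hp1 u

end OneHotCovariance

section BlockDiagonal

variable {ι κ R : Type*} [Fintype ι] [Fintype κ] [DecidableEq ι]

def fstBlockDiagonal [Zero R] (M : ι → Matrix κ κ R) : Matrix (ι × κ) (ι × κ) R :=
  of fun p p' => if p.1 = p'.1 then M p.1 p.2 p'.2 else 0

theorem dotProduct_fstBlockDiagonal_mulVec [CommSemiring R] (M : ι → Matrix κ κ R)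
    (u : ι × κ → R) :
    u ⬝ᵥ fstBlockDiagonal M *ᵥ u = ∑ i, Function.curry u i ⬝ᵥ M i *ᵥ Function.curry u i := by
  simp [dotProduct, mulVec, fstBlockDiagonal, Fintype.sum_prod_type, ite_mul, Finset.sum_ite_irrel]

theorem dotProduct_fstBlockDiagonal_oneHotCov_mulVec_le {p : ι → κ → ℝ}
    (hp : ∀ i a, 0 ≤ p i a) (hp1 : ∀ i, ∑ a, p i a = 1) (u : ι × κ → ℝ) :
    u ⬝ᵥ fstBlockDiagonal (fun i => oneHotCov (p i)) *ᵥ u ≤ 1 / 2 * (u ⬝ᵥ u) := by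
  have hsplit : u ⬝ᵥ u = ∑ i, Function.curry u i ⬝ᵥ Function.curry u i := by
    simp [dotProduct, Fintype.sum_prod_type]
  rw [dotProduct_fstBlockDiagonal_mulVec, hsplit, Finset.mul_sum]
  exact Finset.sum_le_sum fun i _ => dotProduct_oneHotCov_mulVec_le (hp i) (hp1 i) _

end BlockDiagonal

theorem pairProb_comm (ρ : (Fin n → Fin q) → ℝ) (p p' : Fin n × Fin q) :
    pairProb n q ρ p p' = pairProb n q ρ p' p :=
  Finset.sum_congr rfl fun _ _ => by ring

theorem pairProb_fst_eq (ρ : (Fin n → Fin q) → ℝ) (i : Fin n) (a b : Fin q) :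
    pairProb n q ρ (i, a) (i, b) = if a = b then marg n q ρ i a else 0 := by
  simp only [pairProb, marg]
  split_ifs with hab
  · subst hab
    exact Finset.sum_congr rfl fun σ _ => by split_ifs <;> simp
  · exact Finset.sum_eq_zero fun σ _ => by split_ifs <;> simp_all

theorem sum_marg (ρ : (Fin n → Fin q) → ℝ) (hρ1 : ∑ σ, ρ σ = 1) (i : Fin n) :
    ∑ a, marg n q ρ i a = 1 := by
  simp only [marg]
  rw [Finset.sum_comm]
  simpa [← Finset.mul_sum] using hρ1

theorem covMat_fst_eq (ρ : (Fin n → Fin q) → ℝ) (i : Fin n) (a b : Fin q) :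
    covMat n q ρ (i, a) (i, b) = oneHotCov (marg n q ρ i) a b := by
  simp [covMat, oneHotCov, pairProb_fst_eq, diagonal_apply, vecMulVec_apply]

def offBlockCov (ρ : (Fin n → Fin q) → ℝ) : Matrix (Fin n × Fin q) (Fin n × Fin q) ℝ :=
  of fun p p' => if p.1 = p'.1 then 0 else covMat n q ρ p p'

theorem offBlockCov_isHermitian (ρ : (Fin n → Fin q) → ℝ) : (offBlockCov n q ρ).IsHermitian := by
  ext p p'
  simp only [conjTranspose_apply, star_trivial, offBlockCov, of_apply, covMat,
    pairProb_comm n q ρ p']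
  simp only [eq_comm, mul_comm]

theorem covMat_eq_offBlockCov_add (ρ : (Fin n → Fin q) → ℝ) :
    covMat n q ρ = offBlockCov n q ρ + fstBlockDiagonal fun i => oneHotCov (marg n q ρ i) := by
  ext ⟨i, a⟩ ⟨j, b⟩
  simp only [Matrix.add_apply, offBlockCov, fstBlockDiagonal, of_apply]
  split_ifs with h
  · subst h
    rw [zero_add, covMat_fst_eq]
  · rw [add_zero]

theorem inflMat_eq_diagonal_inv_mul (ρ : (Fin n → Fin q) → ℝ)
    (hmarg : ∀ i a, 0 < marg n q ρ i a) :
    inflMat n q ρ = diagonal (Function.uncurry (marg n q ρ))⁻¹ * offBlockCov n q ρ := by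
  ext ⟨i, a⟩ ⟨j, b⟩
  simp only [diagonal_mul, inflMat, offBlockCov, covMat, of_apply, Pi.inv_apply,
    Function.uncurry_apply_pair]
  split_ifs
  · simp
  · field_simp [(hmarg i a).ne']

theorem marg_le_one (ρ : (Fin n → Fin q) → ℝ) (hρ1 : ∑ σ, ρ σ = 1)
    (hmarg : ∀ i a, 0 < marg n q ρ i a) (i : Fin n) (a : Fin q) : marg n q ρ i a ≤ 1 :=
  sum_marg n q ρ hρ1 i ▸
    Finset.single_le_sum (fun b _ => (hmarg i b).le) (Finset.mem_univ a)

theorem influenceCovariance (ρ : (Fin n → Fin q) → ℝ)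
    (hρ1 : ∑ σ, ρ σ = 1)
    (hmarg : ∀ i a, 0 < marg n q ρ i a) :
    (∀ z ∈ spectrum ℂ ((inflMat n q ρ).map (fun x : ℝ => (x : ℂ))), z.im = 0) ∧
    ∀ K : ℝ, (∀ t ∈ spectrum ℝ (inflMat n q ρ), t ≤ K) →
      ∀ u : Fin n × Fin q → ℝ,
        u ⬝ᵥ (covMat n q ρ) *ᵥ u ≤ (K + 1 / 2) * (u ⬝ᵥ u) := by
  have hC := offBlockCov_isHermitian n q ρ
  have hd : ∀ p, 0 < Function.uncurry (marg n q ρ) p := fun p => hmarg p.1 p.2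
  rw [inflMat_eq_diagonal_inv_mul n q ρ hmarg]
  refine ⟨fun z hz => im_eq_zero_of_mem_spectrum_map_diagonal_inv_mul hC hd hz, fun K hK u => ?_⟩
  have hoff := dotProduct_mulVec_le_of_spectrum_diagonal_inv_mul_le hC hd hK
  obtain _ | ⟨⟨p⟩⟩ := isEmpty_or_nonempty (Fin n × Fin q)
  · simp [dotProduct]
  have hK0 : 0 ≤ K := by
    have hdiag : 0 ≤ K * Function.uncurry (marg n q ρ) p := by
      simpa [offBlockCov, Pi.single_apply] using hoff (Pi.single p 1)
    exact nonneg_of_mul_nonneg_left hdiag (hd p)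
  have hweighted : ∑ p, Function.uncurry (marg n q ρ) p * u p ^ 2 ≤ u ⬝ᵥ u :=
    Finset.sum_le_sum fun p _ => by
      rw [← sq]
      exact mul_le_of_le_one_left (sq_nonneg _) (marg_le_one n q ρ hρ1 hmarg p.1 p.2)
  calc u ⬝ᵥ covMat n q ρ *ᵥ u
      = u ⬝ᵥ offBlockCov n q ρ *ᵥ u
        + u ⬝ᵥ (fstBlockDiagonal fun i => oneHotCov (marg n q ρ i)) *ᵥ u := by
        rw [covMat_eq_offBlockCov_add, add_mulVec, dotProduct_add]
    _ ≤ K * (u ⬝ᵥ u) + 1 / 2 * (u ⬝ᵥ u) :=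
        add_le_add ((hoff u).trans (mul_le_mul_of_nonneg_left hweighted hK0))
          (dotProduct_fstBlockDiagonal_oneHotCov_mulVec_le (fun i a => (hmarg i a).le)
            (sum_marg n q ρ hρ1) u)
    _ = (K + 1 / 2) * (u ⬝ᵥ u) := by ring
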